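/- With the same setup (I : X → [0,∞], H̃ : X → ℝ^σ, s(u) = -inf{I(x) : H̃(x) = u}, g continuous, 𝓔^u, 𝓔(g)_β as defined), if for all β ∈ ℝ^σ the function s - g has no supporting hyperplane at u ∈ dom s with normal vector [β,-1], then 𝓔^u ∩ 𝓔(g)_β = ∅ for all β ∈ ℝ^σ. -/
import Mathlib


open scoped RealInnerProductSpace

/-- The microcanonical entropy `s(u) = -inf{I(x) : H̃(x) = u}`. -/
noncomputable def microEntropy {σ : ℕ} {X : Type*} (I : X → EReal)
    (H : X → EuclideanSpace ℝ (Fin σ)) (u : EuclideanSpace ℝ (Fin σ)) : EReal :=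
  -sInf (I '' {x | H x = u})

/-- The set `𝓔^u` of microcanonical equilibrium macrostates: minimizers of `I`
subject to `H̃(x) = u`. -/
def microEquilibrium {σ : ℕ} {X : Type*} (I : X → EReal)
    (H : X → EuclideanSpace ℝ (Fin σ)) (u : EuclideanSpace ℝ (Fin σ)) : Set X :=
  {x | H x = u ∧ ∀ y, H y = u → I x ≤ I y}

/-- The set `𝓔(g)_β` of generalized canonical equilibrium macrostates: minimizers
of `I(x) + ⟨β, H̃(x)⟩ + g(H̃(x))`. -/
def genCanonEquilibrium {σ : ℕ} {X : Type*} (I : X → EReal)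
    (H : X → EuclideanSpace ℝ (Fin σ)) (g : EuclideanSpace ℝ (Fin σ) → ℝ)
    (β : EuclideanSpace ℝ (Fin σ)) : Set X :=
  {x | ∀ y, I x + ((⟪β, H x⟫ + g (H x) : ℝ) : EReal) ≤
    I y + ((⟪β, H y⟫ + g (H y) : ℝ) : EReal)}


/-- if for every `β` the function `s - g` has no supporting
hyperplane at `u ∈ dom s` with normal vector `[β, -1]`, then
`𝓔^u ∩ 𝓔(g)_β = ∅` for every `β` (nonequivalence). -/
theorem nonequivalence_of_no_supporting_hyperplane
    (σ : ℕ) (X : Type*) [MetricSpace X]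
    (I : X → EReal) (hIpos : ∀ x, 0 ≤ I x) (hIlsc : LowerSemicontinuous I)
    (hIcpt : ∀ c : ℝ, IsCompact {x | I x ≤ ((c : ℝ) : EReal)})
    (H : X → EuclideanSpace ℝ (Fin σ)) (hH : Continuous H)
    (hHb : ∃ C : ℝ, ∀ x, ‖H x‖ ≤ C)
    (g : EuclideanSpace ℝ (Fin σ) → ℝ) (hg : Continuous g)
    (u : EuclideanSpace ℝ (Fin σ)) (hu : microEntropy I H u ≠ ⊥)
    (hnosupp : ∀ β : EuclideanSpace ℝ (Fin σ), ∃ v,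
      ¬ (microEntropy I H v - ((g v : ℝ) : EReal) ≤
          microEntropy I H u - ((g u : ℝ) : EReal) + ((⟪β, v - u⟫ : ℝ) : EReal))) :
    ∀ β : EuclideanSpace ℝ (Fin σ),
      microEquilibrium I H u ∩ genCanonEquilibrium I H g β = ∅ := by
  intro β
  by_contra hne
  obtain ⟨x, ⟨hxH, hxmin⟩, hcan⟩ := Set.nonempty_iff_ne_empty.2 hne
  obtain ⟨v, hv⟩ := hnosupp β
  apply hv
  -- `sInf (I '' {x | H x = u}) = I x`
  have hsInf : sInf (I '' {y | H y = u}) = I x := by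
    refine le_antisymm (sInf_le ⟨x, hxH, rfl⟩) (le_sInf ?_)
    rintro b ⟨y, hy, rfl⟩
    exact hxmin y hy
  have hIxtop : I x ≠ ⊤ := by
    intro h
    apply hu
    simp [microEntropy, hsInf, h]
  have hIxbot : I x ≠ ⊥ := ne_of_gt (lt_of_lt_of_le (by simp) (hIpos x))
  set r : ℝ := (I x).toReal with hr
  have hIx : I x = (r : EReal) := (EReal.coe_toReal hIxtop hIxbot).symm
  set c : ℝ := ⟪β, u⟫ + g u with hc
  set d : ℝ := ⟪β, v⟫ + g v with hd
  -- lower bound on the infimum over `{H = v}`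
  have hlow : ((r + c - d : ℝ) : EReal) ≤ sInf (I '' {y | H y = v}) := by
    refine le_sInf ?_
    rintro b ⟨y, hy, rfl⟩
    have h1 := hcan y
    rw [hxH, hy, hIx, ← hc, ← hd, ← EReal.coe_add] at h1
    have h2 : ((r + c : ℝ) : EReal) - (d : EReal) ≤ I y + (d : EReal) - (d : EReal) := by
      exact EReal.sub_le_sub h1 le_rfl
    rw [EReal.add_sub_cancel_right, ← EReal.coe_sub] at h2
    exact h2
  have hsu : microEntropy I H u = ((-r : ℝ) : EReal) := by
    simp [microEntropy, hsInf, hIx, ← EReal.coe_neg]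
  have hsv : microEntropy I H v ≤ ((-(r + c - d) : ℝ) : EReal) := by
    rw [microEntropy, EReal.coe_neg]
    exact EReal.neg_le_neg_iff.2 hlow
  calc microEntropy I H v - ((g v : ℝ) : EReal)
      ≤ ((-(r + c - d) : ℝ) : EReal) - ((g v : ℝ) : EReal) := EReal.sub_le_sub hsv le_rfl
    _ = ((-(r + c - d) - g v : ℝ) : EReal) := by rw [EReal.coe_sub]
    _ = ((-r - g u + ⟪β, v - u⟫ : ℝ) : EReal) := by
        rw [EReal.coe_eq_coe_iff, inner_sub_right, hc, hd]; ring
    _ = microEntropy I H u - ((g u : ℝ) : EReal) + ((⟪β, v - u⟫ : ℝ) : EReal) := by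
        rw [hsu, ← EReal.coe_sub, ← EReal.coe_add]
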